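/- arXiv:2405.03539 — 2 statements merged into one kernel-verified Lean document; each statement's English description precedes it below -/
import Mathlib

section
/- Let A, B ∈ SL(2, ℂ). Then A and B have a common fixed point in ℙ¹(ℂ) (a common invariant complex line in ℂ²) if and only if tr(A·B·A⁻¹·B⁻¹) = 2. -/
open Matrix

private lemma trace_mul_adj (A B : Matrix (Fin 2) (Fin 2) ℂ) :
    Matrix.trace (A * B * A.adjugate * B.adjugate) =
      2 * A.det * B.det - (A * B - B * A).det := by
  simp [Matrix.trace_fin_two, Matrix.det_fin_two, Matrix.adjugate_fin_two,
    Matrix.mul_apply, Fin.sum_univ_two, Matrix.sub_apply]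
  ring

private lemma comm_identityA (A B : Matrix (Fin 2) (Fin 2) ℂ) :
    (A * B - B * A) * A = Matrix.trace A • (A * B - B * A) - A * (A * B - B * A) := by
  rw [Matrix.trace_fin_two]
  ext i j
  fin_cases i <;> fin_cases j <;>
    simp [Matrix.mul_apply, Fin.sum_univ_two, Matrix.sub_apply, Matrix.smul_apply,
      smul_eq_mul, Fin.mk_zero, Fin.mk_one] <;> ring

private lemma comm_identityB (A B : Matrix (Fin 2) (Fin 2) ℂ) :
    (A * B - B * A) * B = Matrix.trace B • (A * B - B * A) - B * (A * B - B * A) := by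
  rw [Matrix.trace_fin_two]
  ext i j
  fin_cases i <;> fin_cases j <;>
    simp [Matrix.mul_apply, Fin.sum_univ_two, Matrix.sub_apply, Matrix.smul_apply,
      smul_eq_mul, Fin.mk_zero, Fin.mk_one] <;> ring

theorem common_fixed_point_iff_commutator_trace_two
    (A B : Matrix.SpecialLinearGroup (Fin 2) ℂ) :
    (∃ W : Submodule ℂ (Fin 2 → ℂ), Module.finrank ℂ W = 1 ∧
      (∀ v ∈ W, (A : Matrix (Fin 2) (Fin 2) ℂ).mulVec v ∈ W) ∧
      (∀ v ∈ W, (B : Matrix (Fin 2) (Fin 2) ℂ).mulVec v ∈ W)) ↔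
    Matrix.trace ((A * B * A⁻¹ * B⁻¹ : Matrix.SpecialLinearGroup (Fin 2) ℂ) :
      Matrix (Fin 2) (Fin 2) ℂ) = 2 := by
  set A' : Matrix (Fin 2) (Fin 2) ℂ := (A : Matrix (Fin 2) (Fin 2) ℂ) with hA'
  set B' : Matrix (Fin 2) (Fin 2) ℂ := (B : Matrix (Fin 2) (Fin 2) ℂ) with hB'
  have hA : A'.det = 1 := A.2
  have hB : B'.det = 1 := B.2
  have hcoe : ((A * B * A⁻¹ * B⁻¹ : Matrix.SpecialLinearGroup (Fin 2) ℂ) :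
      Matrix (Fin 2) (Fin 2) ℂ) = A' * B' * A'.adjugate * B'.adjugate := by
    simp [Matrix.SpecialLinearGroup.coe_mul, Matrix.SpecialLinearGroup.coe_inv, hA', hB']
  have htr : Matrix.trace ((A * B * A⁻¹ * B⁻¹ : Matrix.SpecialLinearGroup (Fin 2) ℂ) :
      Matrix (Fin 2) (Fin 2) ℂ) = 2 - (A' * B' - B' * A').det := by
    rw [hcoe, trace_mul_adj, hA, hB]; ring
  rw [htr]
  constructor
  · rintro ⟨W, hW1, hWA, hWB⟩
    have hWbot : W ≠ ⊥ := by
      intro h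
      rw [h, finrank_bot] at hW1
      exact absurd hW1 (by norm_num)
    obtain ⟨v, hvW, hv0⟩ := (Submodule.ne_bot_iff W).mp hWbot
    have hsp : Submodule.span ℂ {v} = W := by
      apply Submodule.eq_of_le_of_finrank_eq
      · rw [Submodule.span_le, Set.singleton_subset_iff]; exact hvW
      · rw [finrank_span_singleton hv0, hW1]
    obtain ⟨a, ha⟩ := Submodule.mem_span_singleton.mp (hsp ▸ hWA v hvW)
    obtain ⟨b, hb⟩ := Submodule.mem_span_singleton.mp (hsp ▸ hWB v hvW)
    have hCv : (A' * B' - B' * A').mulVec v = 0 := by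
      rw [Matrix.sub_mulVec, ← Matrix.mulVec_mulVec, ← Matrix.mulVec_mulVec,
        ← hb, ← ha, Matrix.mulVec_smul, Matrix.mulVec_smul, ← ha, ← hb]
      rw [smul_comm, sub_self]
    have hdet : (A' * B' - B' * A').det = 0 :=
      Matrix.exists_mulVec_eq_zero_iff.mp ⟨v, hv0, hCv⟩
    rw [hdet, sub_zero]
  · intro h
    have hdet : (A' * B' - B' * A').det = 0 := by linear_combination -h
    by_cases hC0 : A' * B' - B' * A' = 0
    · -- commuting case
      have hAB : A' * B' = B' * A' := sub_eq_zero.mp hC0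
      obtain ⟨a, ha⟩ := Module.End.exists_eigenvalue (Matrix.mulVecLin A')
      set E := Module.End.eigenspace (Matrix.mulVecLin A') a with hE
      have hBE : ∀ u ∈ E, (Matrix.mulVecLin B') u ∈ E := by
        intro u hu
        rw [hE, Module.End.mem_eigenspace_iff] at hu ⊢
        simp only [Matrix.mulVecLin_apply] at hu ⊢
        rw [Matrix.mulVec_mulVec, hAB, ← Matrix.mulVec_mulVec, hu, Matrix.mulVec_smul]
      haveI : Nontrivial E := Submodule.nontrivial_iff_ne_bot.mpr ha
      obtain ⟨b, hbb⟩ := Module.End.exists_eigenvalue ((Matrix.mulVecLin B').restrict hBE)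
      obtain ⟨w, hw⟩ := hbb.exists_hasEigenvector
      set u : Fin 2 → ℂ := (w : Fin 2 → ℂ) with hu
      have hu0 : u ≠ 0 := fun hz => hw.2 (by exact_mod_cast Subtype.coe_injective (hz.trans rfl))
      have hAu : A'.mulVec u = a • u := by
        have hwE := w.2
        rw [Module.End.mem_eigenspace_iff] at hwE
        simpa using hwE
      have hBu : B'.mulVec u = b • u := by
        have := congrArg Subtype.val hw.apply_eq_smul
        simpa [LinearMap.restrict_coe_apply] using this
      refine ⟨Submodule.span ℂ {u}, finrank_span_singleton hu0, ?_, ?_⟩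
      · intro x hx
        obtain ⟨c, hc⟩ := Submodule.mem_span_singleton.mp hx
        rw [← hc, Matrix.mulVec_smul, hAu]
        exact Submodule.smul_mem _ _ (Submodule.smul_mem _ _ (Submodule.mem_span_singleton_self u))
      · intro x hx
        obtain ⟨c, hc⟩ := Submodule.mem_span_singleton.mp hx
        rw [← hc, Matrix.mulVec_smul, hBu]
        exact Submodule.smul_mem _ _ (Submodule.smul_mem _ _ (Submodule.mem_span_singleton_self u))
    · -- noncommuting nilpotent case
      set C : Matrix (Fin 2) (Fin 2) ℂ := A' * B' - B' * A' with hC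
      refine ⟨LinearMap.ker (Matrix.mulVecLin C), ?_, ?_, ?_⟩
      · have hrk := LinearMap.finrank_range_add_finrank_ker (Matrix.mulVecLin C)
        have hdim : Module.finrank ℂ (Fin 2 → ℂ) = 2 := by simp
        rw [hdim] at hrk
        have hker_ne : Module.finrank ℂ (LinearMap.ker (Matrix.mulVecLin C)) ≠ 0 := by
          intro h0
          obtain ⟨x, hx0, hx⟩ := Matrix.exists_mulVec_eq_zero_iff.mpr hdet
          have hxker : x ∈ LinearMap.ker (Matrix.mulVecLin C) := by
            rw [LinearMap.mem_ker, Matrix.mulVecLin_apply]; exact hx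
          rw [Submodule.finrank_eq_zero] at h0
          rw [h0, Submodule.mem_bot] at hxker
          exact hx0 hxker
        have hrange_ne : Module.finrank ℂ (LinearMap.range (Matrix.mulVecLin C)) ≠ 0 := by
          intro h0
          rw [Submodule.finrank_eq_zero, LinearMap.range_eq_bot] at h0
          apply hC0
          ext i j
          have := congrFun (congrFun (congrArg DFunLike.coe h0) (Pi.single j 1)) i
          simpa [Matrix.mulVecLin_apply, Matrix.mulVec_single] using this
        omega
      · intro x hx
        rw [LinearMap.mem_ker, Matrix.mulVecLin_apply] at hx ⊢
        rw [Matrix.mulVec_mulVec, hC, comm_identityA A' B',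
          Matrix.sub_mulVec, Matrix.smul_mulVec, ← Matrix.mulVec_mulVec, ← hC, hx]
        simp
      · intro x hx
        rw [LinearMap.mem_ker, Matrix.mulVecLin_apply] at hx ⊢
        rw [Matrix.mulVec_mulVec, hC, comm_identityB A' B',
          Matrix.sub_mulVec, Matrix.smul_mulVec, ← Matrix.mulVec_mulVec, ← hC, hx]
        simp
end

section
/- Let θ be a real number with 0 < θ ≤ π/3, let R : ℝ³ → ℝ³ be the rotation by angle θ about the z-axis, and let N = (0,0,1). Then for every point p on the unit sphere with p not on the z-axis (i.e. p ≠ N and p ≠ -N), we have 0 < ‖R p - p‖ < ‖p - N‖. -/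
open Real

lemma norm_sq_eucl3 (v : EuclideanSpace ℝ (Fin 3)) :
    ‖v‖ ^ 2 = (v 0) ^ 2 + (v 1) ^ 2 + (v 2) ^ 2 := by
  rw [EuclideanSpace.norm_eq, Real.sq_sqrt (by positivity)]
  simp [Fin.sum_univ_three, sq_abs]

theorem rotation_moves_less_than_distance_to_pole
    (θ : ℝ) (hθ0 : 0 < θ) (hθ1 : θ ≤ π / 3)
    (R : EuclideanSpace ℝ (Fin 3) → EuclideanSpace ℝ (Fin 3))
    (hR : ∀ p : EuclideanSpace ℝ (Fin 3),
      R p = ![Real.cos θ * p 0 - Real.sin θ * p 1,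
              Real.sin θ * p 0 + Real.cos θ * p 1,
              p 2])
    (N : EuclideanSpace ℝ (Fin 3)) (hN : N = ![(0 : ℝ), 0, 1])
    (p : EuclideanSpace ℝ (Fin 3)) (hp : ‖p‖ = 1)
    (hpN : p ≠ N) (hpS : p ≠ -N) :
    0 < ‖R p - p‖ ∧ ‖R p - p‖ < ‖p - N‖ := by
  have hπ : (0:ℝ) < π := Real.pi_pos
  have hsum : (p 0) ^ 2 + (p 1) ^ 2 + (p 2) ^ 2 = 1 := by
    have := norm_sq_eucl3 p
    rw [hp] at this; linarith
  have hc1 : Real.cos θ < 1 := by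
    have : Real.cos θ < Real.cos 0 :=
      Real.cos_lt_cos_of_nonneg_of_le_pi le_rfl (by linarith) hθ0
    rwa [Real.cos_zero] at this
  have hc2 : (1:ℝ)/2 ≤ Real.cos θ := by
    have : Real.cos (π/3) ≤ Real.cos θ :=
      Real.cos_le_cos_of_nonneg_of_le_pi (le_of_lt hθ0) (by linarith) hθ1
    rwa [Real.cos_pi_div_three] at this
  have hpyth : Real.sin θ ^ 2 + Real.cos θ ^ 2 = 1 := Real.sin_sq_add_cos_sq θ
  have hr : 0 < (p 0) ^ 2 + (p 1) ^ 2 := by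
    rcases lt_or_eq_of_le (by positivity : (0:ℝ) ≤ (p 0) ^ 2 + (p 1) ^ 2) with h | h
    · exact h
    exfalso
    have hx0 : p 0 = 0 := by nlinarith [sq_nonneg (p 0), sq_nonneg (p 1)]
    have hy0 : p 1 = 0 := by nlinarith [sq_nonneg (p 0), sq_nonneg (p 1)]
    have hz1 : p 2 = 1 ∨ p 2 = -1 := by
      have h0 : (p 2 - 1) * (p 2 + 1) = 0 := by nlinarith
      rcases mul_eq_zero.mp h0 with h' | h'
      · left; linarith
      · right; linarith
    rcases hz1 with h1 | h1
    · apply hpN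
      ext i; rw [hN]; fin_cases i <;> simp [hx0, hy0, h1]
    · apply hpS
      ext i; rw [PiLp.neg_apply, hN]; fin_cases i <;> simp [hx0, hy0, h1]
  have hzne : p 2 ≠ 1 := fun h1 => by nlinarith
  have hA : ‖R p - p‖ ^ 2 = (2 - 2 * Real.cos θ) * ((p 0) ^ 2 + (p 1) ^ 2) := by
    rw [norm_sq_eucl3]; simp only [PiLp.sub_apply]; rw [hR p]
    simp only [PiLp.sub_apply, Matrix.cons_val_zero, Matrix.cons_val_one,
      Matrix.head_cons, Matrix.cons_val_two, Matrix.tail_cons]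
    linear_combination ((p 0) ^ 2 + (p 1) ^ 2) * hpyth
  have hB : ‖p - N‖ ^ 2 = (p 0) ^ 2 + (p 1) ^ 2 + (p 2 - 1) ^ 2 := by
    rw [norm_sq_eucl3]; simp only [PiLp.sub_apply]; rw [hN]
    simp only [PiLp.sub_apply, Matrix.cons_val_zero, Matrix.cons_val_one,
      Matrix.head_cons, Matrix.cons_val_two, Matrix.tail_cons]
    ring
  have hz1sq : 0 < (p 2 - 1) ^ 2 := by
    have := sub_ne_zero.mpr hzne
    positivity
  have hlt : ‖R p - p‖ ^ 2 < ‖p - N‖ ^ 2 := by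
    rw [hA, hB]; nlinarith
  have hpos : 0 < ‖R p - p‖ := by
    have h2 : 0 < ‖R p - p‖ ^ 2 := by rw [hA]; nlinarith
    have hne : ‖R p - p‖ ≠ 0 := by
      intro h0
      rw [h0] at h2
      norm_num at h2
    exact lt_of_le_of_ne (norm_nonneg _) (Ne.symm hne)
  exact ⟨hpos, lt_of_pow_lt_pow_left₀ 2 (norm_nonneg _) hlt⟩
end
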